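/- arXiv:2304.11468 — 6 statements merged into one kernel-verified Lean document; each statement's English description precedes it below -/
import Mathlib

section
/- Let D, d, d_e be positive integers with d_e ≤ d ≤ D. Let β_s = ⌊D/d⌋ and β_l = ⌈D/d⌉. Partition D input dimensions into d bins, of which dβ_l − D bins have size β_s and D − dβ_s bins have size β_l. Then the probability that a uniformly random d_e-subset of the D dimensions hits each bin at most once equals (∑_{i=0}^{d_e} C(d(1+β_s)−D, i) · C(D−dβ_s, d_e−i) · β_s^i · β_l^{d_e−i}) / C(D, d_e). -/
/-!
A `d_e`-subset meeting `d_e` distinct bins is the same as a set `T` of `d_e` bins together with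
one element chosen from each bin of `T`. Hence the number of successes is
`∑_{|T| = d_e} ∏_{j ∈ T} |bin j|`, the coefficient of `X ^ d_e` in `∏_j (1 + |bin j| X)`.
With the near-balanced bin sizes this product is
`(1 + β_s X) ^ (dβ_l - D) (1 + β_l X) ^ (D - dβ_s)`, and the binomial theorem gives the stated sum.
-/

open Finset Polynomial

namespace Polynomial

variable {R : Type*} [CommSemiring R]

theorem coeff_prod_one_add_C_mul_X {ι : Type*} (s : Finset ι) (c : ι → R) (k : ℕ) :
    (∏ j ∈ s, (1 + C (c j) * X)).coeff k = ∑ T ∈ s.powersetCard k, ∏ j ∈ T, c j := by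
  rw [prod_one_add]
  simp_rw [prod_mul_distrib, prod_const, ← map_prod, finsetSum_coeff, coeff_C_mul_X_pow, sum_ite,
    sum_const_zero, add_zero, powersetCard_eq_filter, eq_comm]

theorem coeff_one_add_C_mul_X_pow (a : R) (n k : ℕ) :
    ((1 + C a * X) ^ n).coeff k = n.choose k * a ^ k := by
  have hcomp : (1 + C a * X) ^ n = ((1 + X) ^ n).comp (C a * X) := by simp [pow_comp]
  rw [hcomp, comp_C_mul_X_coeff, coeff_one_add_X_pow]

end Polynomial

theorem Finset.sum_powersetCard_prod_ite {ι R : Type*} [CommSemiring R] (s : Finset ι)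
    (p : ι → Prop) [DecidablePred p] (a b : R) (k : ℕ) :
    ∑ T ∈ s.powersetCard k, ∏ j ∈ T, (if p j then a else b)
      = ∑ i ∈ range (k + 1),
          ((#{j ∈ s | ¬p j}).choose i * (#{j ∈ s | p j}).choose (k - i) * b ^ i * a ^ (k - i)
            : R) := by
  have hsplit : ∀ j, 1 + C (if p j then a else b) * X
      = if p j then 1 + C a * X else 1 + C b * X := fun j => by split_ifs <;> rfl
  rw [← coeff_prod_one_add_C_mul_X]
  simp_rw [hsplit]
  rw [prod_ite, prod_const, prod_const, mul_comm, coeff_mul,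
    Nat.sum_antidiagonal_eq_sum_range_succ_mk]
  simp_rw [coeff_one_add_C_mul_X_pow]
  exact sum_congr rfl fun i _ => by ring

section Transversal

variable {α β : Type*} [Fintype α] [DecidableEq α] [DecidableEq β] (f : α → β)

theorem Finset.card_filter_image_eq_prod_card_fiber (T : Finset β) :
    #{s ∈ univ.powersetCard #T | s.image f = T} = ∏ j ∈ T, #{a | f a = j} := by
  rw [← card_pi]
  symm
  refine card_bij (fun p _ => T.attach.image fun j => p j.1 j.2) ?_ ?_ ?_
  · intro p hp
    simp only [mem_pi, mem_filter, mem_univ, true_and] at hp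
    have himage : (T.attach.image fun j => p j.1 j.2).image f = T := by
      simp [image_image, Function.comp_def, hp]
    have hinj : Set.InjOn (fun j : T => p j.1 j.2) T.attach := fun x _ y _ hxy => by
      simpa [hp] using congrArg f hxy
    simp [card_image_of_injOn hinj, himage]
  · intro p hp q hq hpq
    simp only [mem_pi, mem_filter, mem_univ, true_and] at hp hq
    funext j hj
    obtain ⟨i, -, hi⟩ := mem_image.mp (hpq ▸ mem_image_of_mem _ (mem_attach T ⟨j, hj⟩))
    obtain rfl : i = ⟨j, hj⟩ := Subtype.ext (by simpa [hp, hq] using congrArg f hi)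
    exact hi.symm
  · intro s hs
    simp only [mem_filter, mem_powersetCard] at hs
    obtain ⟨⟨-, hcard⟩, himage⟩ := hs
    have hsurj : ∀ j ∈ T, ∃ a ∈ s, f a = j := fun j hj => mem_image.mp (himage ▸ hj)
    choose g hgs hgf using hsurj
    refine ⟨g, by simp [mem_pi, hgf], ?_⟩
    have hinj : Set.InjOn (fun j : T => g j.1 j.2) T.attach := fun x _ y _ hxy => by
      simpa [hgf] using congrArg f hxy
    refine eq_of_subset_of_card_le (fun a ha => ?_) ?_
    · obtain ⟨j, -, rfl⟩ := mem_image.mp ha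
      exact hgs j.1 j.2
    · rw [card_image_of_injOn hinj, card_attach, hcard]

theorem Finset.card_filter_card_image_eq_sum_prod_card_fiber [Fintype β] (k : ℕ) :
    #{s ∈ univ.powersetCard k | #(s.image f) = k}
      = ∑ T ∈ univ.powersetCard k, ∏ j ∈ T, #{a | f a = j} := by
  rw [card_eq_sum_card_fiberwise (f := fun s => s.image f) (t := univ.powersetCard k)]
  · refine sum_congr rfl fun T hT => ?_
    rw [mem_powersetCard] at hT
    rw [← card_filter_image_eq_prod_card_fiber, filter_filter, hT.2]
    exact congrArg card (filter_congr fun s _ => and_iff_right_of_imp fun h => by rw [h, hT.2])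
  · intro s hs
    simp only [coe_filter, Set.mem_ofPred_eq, mem_powersetCard] at hs
    exact mem_powersetCard.mpr ⟨subset_univ _, hs.2⟩

end Transversal

theorem baxus_near_balanced_success_probability_general
    (D d de βs βl : ℕ) (hd : 0 < d)
    (hβs : βs = D / d)
    (bin : Fin D → Fin d)
    (hfib : ∀ j : Fin d,
      (Finset.univ.filter (fun i => bin i = j)).card
        = if (j : ℕ) < D - d * βs then βl else βs) :
    (((Finset.univ.powersetCard de).filter
        (fun s : Finset (Fin D) => (s.image bin).card = de)).card : ℝ) /
      (D.choose de : ℝ)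
      = ((∑ i ∈ Finset.range (de + 1),
            (d * (1 + βs) - D).choose i * (D - d * βs).choose (de - i)
              * βs ^ i * βl ^ (de - i) : ℕ) : ℝ) / (D.choose de : ℝ) := by
  have hlarge : D - d * βs < d := by
    have := Nat.div_add_mod D d
    have := Nat.mod_lt D hd
    subst hβs
    omega
  have hsmall : d * (1 + βs) - D = d - (D - d * βs) := by
    have := hβs ▸ Nat.mul_div_le D d
    rw [mul_add, mul_one]
    omega
  have hcard_large : #{j : Fin d | (j : ℕ) < D - d * βs} = D - d * βs := by
    rw [Fin.card_filter_val_lt, min_eq_right hlarge.le]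
  have hcard_small : #{j : Fin d | ¬(j : ℕ) < D - d * βs} = d * (1 + βs) - D := by
    rw [filter_not, card_sdiff_of_subset (filter_subset _ _), card_univ, Fintype.card_fin,
      hcard_large, hsmall]
  rw [card_filter_card_image_eq_sum_prod_card_fiber,
    sum_congr rfl fun T _ => prod_congr rfl fun j _ => hfib j, sum_powersetCard_prod_ite,
    hcard_large, hcard_small]
  simp only [Nat.cast_id]

/-- near-balanced bins. `D` input dimensions are partitioned into
`d` bins, `D − d·⌊D/d⌋` of which have size `β_l = ⌈D/d⌉` and the remaining
`d·⌈D/d⌉ − D` have size `β_s = ⌊D/d⌋`. The probability that a uniformly random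
`d_e`-subset hits each bin at most once equals
`(∑_{i=0}^{d_e} C(d(1+β_s)−D, i)·C(D−dβ_s, d_e−i)·β_s^i·β_l^{d_e−i}) / C(D,d_e)`. -/
theorem baxus_near_balanced_success_probability
    (D d de βs βl : ℕ) (hde : 0 < de) (hd : 0 < d) (hdeD : de ≤ d) (hdD : d ≤ D)
    (hβs : βs = D / d) (hβl : βl = (D + d - 1) / d)
    (bin : Fin D → Fin d)
    (hfib : ∀ j : Fin d,
      (Finset.univ.filter (fun i => bin i = j)).card
        = if (j : ℕ) < D - d * βs then βl else βs) :
    (((Finset.univ.powersetCard de).filter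
        (fun s : Finset (Fin D) => (s.image bin).card = de)).card : ℝ) /
      (D.choose de : ℝ)
      = ((∑ i ∈ Finset.range (de + 1),
            (d * (1 + βs) - D).choose i * (D - d * βs).choose (de - i)
              * βs ^ i * βl ^ (de - i) : ℕ) : ℝ) / (D.choose de : ℝ) :=
  baxus_near_balanced_success_probability_general D d de βs βl hd hβs bin hfib
end

section
/- Fix positive integers d_e ≤ d. For every positive integer D ≥ d, the BAxUS worst-case success probability p_B(D, d, d_e) = (∑_{i=0}^{d_e} C(d(1+⌊D/d⌋)−D, i) · C(D−d⌊D/d⌋, d_e−i) · ⌊D/d⌋^i · ⌈D/d⌉^{d_e−i}) / C(D, d_e) satisfies d!/((d−d_e)!·d^{d_e}) ≤ p_B(D, d, d_e). -/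
/-!
Draw the `k = d_e` active dimensions one after another. Whichever `j` bins the first `j` draws occupy,
they hold at most `j ⌊D/d⌋ + min(j, D mod d)` elements, so the next draw lands in a fresh bin with
conditional probability at least `(d - j)/d`. Multiplying over `j < k` gives
`p_B ≥ d (d-1) ⋯ (d-k+1) / d^k`.
-/

/-- The BAxUS worst-case success probability for input dimensionality `D`,
target dimensionality `d`, effective dimensionality `de`, with near-balanced
bins of sizes `β_s = ⌊D/d⌋` and `β_l = ⌈D/d⌉`. -/
noncomputable def pB (D d de : ℕ) : ℝ :=
  ((∑ i ∈ Finset.range (de + 1),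
      (d * (1 + D / d) - D).choose i * (D - d * (D / d)).choose (de - i)
        * (D / d) ^ i * ((D + d - 1) / d) ^ (de - i) : ℕ) : ℝ)
    / (D.choose de : ℝ)

open Finset

/-- The number of `k`-subsets of a set split into `a` bins of size `s` and `b` bins of size `t`
that meet `k` distinct bins; `i` counts the small bins met. -/
def distinctBinCount (s t a b k : ℕ) : ℕ :=
  ∑ i ∈ range (k + 1), a.choose i * b.choose (k - i) * s ^ i * t ^ (k - i)

theorem distinctBinCount_zero_large (s t a k : ℕ) :
    distinctBinCount s t a 0 k = a.choose k * s ^ k := by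
  rw [distinctBinCount, sum_eq_single_of_mem k (self_mem_range_succ k)]
  · simp
  · intro i hi hik
    simp [Nat.choose_eq_zero_of_lt (by simp at hi; omega : 0 < k - i)]

/-- Double counting of `(k+1)`-subsets with a marked element: removing the mark leaves a
`k`-subset meeting `i` small and `k - i` large bins, and the mark lies in one of the
`(a - i) * s + (b - (k - i)) * t` elements of the unused bins. -/
theorem succ_mul_distinctBinCount_succ (s t a b k : ℕ) :
    (k + 1) * distinctBinCount s t a b (k + 1) =
      ∑ i ∈ range (k + 1), a.choose i * b.choose (k - i) * s ^ i * t ^ (k - i) *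
        ((a - i) * s + (b - (k - i)) * t) := by
  set g : ℕ → ℕ := fun i => a.choose i * b.choose (k + 1 - i) * s ^ i * t ^ (k + 1 - i)
  have mark_small : ∑ i ∈ range (k + 1),
      a.choose i * b.choose (k - i) * s ^ i * t ^ (k - i) * ((a - i) * s) =
        ∑ i ∈ range (k + 2), i * g i := by
    rw [sum_range_succ' _ (k + 1)]
    simp only [g, zero_mul, add_zero]
    refine sum_congr rfl fun i _ => ?_
    rw [show k + 1 - (i + 1) = k - i by omega]
    calc _ = a.choose i * (a - i) * (b.choose (k - i) * s ^ (i + 1) * t ^ (k - i)) := by ring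
      _ = a.choose (i + 1) * (i + 1) * (b.choose (k - i) * s ^ (i + 1) * t ^ (k - i)) := by
        rw [Nat.choose_succ_right_eq]
      _ = _ := by ring
  have mark_large : ∑ i ∈ range (k + 1),
      a.choose i * b.choose (k - i) * s ^ i * t ^ (k - i) * ((b - (k - i)) * t) =
        ∑ i ∈ range (k + 2), (k + 1 - i) * g i := by
    rw [sum_range_succ _ (k + 1)]
    simp only [g, Nat.sub_self, zero_mul, add_zero]
    refine sum_congr rfl fun i hi => ?_
    rw [show k + 1 - i = k - i + 1 by simp at hi; omega]
    calc _ = b.choose (k - i) * (b - (k - i)) * (a.choose i * s ^ i * t ^ (k - i + 1)) := by ring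
      _ = b.choose (k - i + 1) * (k - i + 1) * (a.choose i * s ^ i * t ^ (k - i + 1)) := by
        rw [Nat.choose_succ_right_eq]
      _ = _ := by ring
  simp_rw [mul_add, sum_add_distrib]
  rw [mark_small, mark_large, ← sum_add_distrib, distinctBinCount, mul_sum]
  refine sum_congr rfl fun i hi => ?_
  rw [← add_mul, Nat.add_sub_cancel' (by simpa [Nat.lt_succ_iff] using hi)]

theorem unused_size_lower_bound {a b s k i : ℕ} (hik : i ≤ k) (hia : i ≤ a) (hkb : k - i ≤ b) :
    (a + b - k) * (a * s + b * (s + 1) - k) ≤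
      (a + b) * ((a - i) * s + (b - (k - i)) * (s + 1)) := by
  rcases lt_or_ge (a * s + b * (s + 1)) k with h | h
  · simp [Nat.sub_eq_zero_of_le h.le]
  obtain ⟨m, rfl⟩ : ∃ m, k = i + m := ⟨k - i, by omega⟩
  rw [Nat.add_sub_cancel_left] at hkb ⊢
  zify [h, hia, hkb, (by omega : i + m ≤ a + b)]
  -- the difference of the two sides is `i * (a + b - (i + m)) + (i + m) * (b - m)`
  nlinarith [mul_nonneg (Int.natCast_nonneg i) (Int.natCast_nonneg (a + b - (i + m))),
    mul_nonneg (Int.natCast_nonneg (i + m)) (Int.natCast_nonneg (b - m))]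

theorem sub_mul_sub_mul_distinctBinCount_le (s a b k : ℕ) :
    (a + b - k) * (a * s + b * (s + 1) - k) * distinctBinCount s (s + 1) a b k ≤
      (a + b) * ((k + 1) * distinctBinCount s (s + 1) a b (k + 1)) := by
  rw [succ_mul_distinctBinCount_succ, distinctBinCount, mul_sum, mul_sum]
  refine sum_le_sum fun i hi => ?_
  have hik : i ≤ k := Nat.lt_succ_iff.1 (mem_range.1 hi)
  rcases lt_or_ge a i with hia | hia
  · simp [Nat.choose_eq_zero_of_lt hia]
  rcases lt_or_ge b (k - i) with hkb | hkb
  · simp [Nat.choose_eq_zero_of_lt hkb]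
  calc _ = (a + b - k) * (a * s + b * (s + 1) - k) *
        (a.choose i * b.choose (k - i) * s ^ i * (s + 1) ^ (k - i)) := by ring
    _ ≤ (a + b) * ((a - i) * s + (b - (k - i)) * (s + 1)) *
        (a.choose i * b.choose (k - i) * s ^ i * (s + 1) ^ (k - i)) :=
      Nat.mul_le_mul_right _ (unused_size_lower_bound hik hia hkb)
    _ = _ := by ring

theorem descFactorial_mul_choose_le_pow_mul_distinctBinCount (s a b : ℕ) :
    ∀ k, (a + b).descFactorial k * (a * s + b * (s + 1)).choose k ≤
      (a + b) ^ k * distinctBinCount s (s + 1) a b k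
  | 0 => by simp [distinctBinCount]
  | k + 1 => by
    set D := a * s + b * (s + 1)
    refine Nat.le_of_mul_le_mul_right (c := k + 1) ?_ k.succ_pos
    calc (a + b).descFactorial (k + 1) * D.choose (k + 1) * (k + 1)
        = (a + b - k) * (D - k) * ((a + b).descFactorial k * D.choose k) := by
          rw [mul_assoc, Nat.choose_succ_right_eq, Nat.descFactorial_succ]; ring
      _ ≤ (a + b - k) * (D - k) * ((a + b) ^ k * distinctBinCount s (s + 1) a b k) :=
          Nat.mul_le_mul_left _ (descFactorial_mul_choose_le_pow_mul_distinctBinCount s a b k)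
      _ = (a + b) ^ k * ((a + b - k) * (D - k) * distinctBinCount s (s + 1) a b k) := by ring
      _ ≤ (a + b) ^ k * ((a + b) * ((k + 1) * distinctBinCount s (s + 1) a b (k + 1))) :=
          Nat.mul_le_mul_left _ (sub_mul_sub_mul_distinctBinCount_le s a b k)
      _ = (a + b) ^ (k + 1) * distinctBinCount s (s + 1) a b (k + 1) * (k + 1) := by ring

theorem add_pred_div_eq_div_add_one {D d : ℕ} (hd : 0 < d) (h : D % d ≠ 0) :
    (D + d - 1) / d = D / d + 1 := by
  have hr := Nat.mod_lt D hd
  have hD := Nat.div_add_mod D d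
  have hsplit : D + d - 1 = (D % d - 1) + d * (D / d + 1) := by rw [mul_add, mul_one]; omega
  rw [hsplit, Nat.add_mul_div_left _ _ hd, Nat.div_eq_of_lt (by omega), zero_add]

theorem pB_eq_distinctBinCount {d : ℕ} (hd : 0 < d) (D de : ℕ) :
    pB D d de = (distinctBinCount (D / d) (D / d + 1) (d * (1 + D / d) - D) (D - d * (D / d)) de
      : ℝ) / D.choose de := by
  change (distinctBinCount _ ((D + d - 1) / d) _ _ de : ℝ) / _ = _
  rcases eq_or_ne (D - d * (D / d)) 0 with h0 | h0
  · rw [h0, distinctBinCount_zero_large, distinctBinCount_zero_large]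
  · rw [add_pred_div_eq_div_add_one hd (Nat.mod_eq_sub_mul_div ▸ h0)]

/-- the HeSBO worst-case success probability
`d!/((d−d_e)!·d^{d_e})` is a lower bound for the BAxUS one. -/
theorem hesbo_le_baxus (d de : ℕ) (hde : 0 < de) (hded : de ≤ d) :
    ∀ D : ℕ, d ≤ D →
      (d.factorial : ℝ) / ((d - de).factorial * d ^ de) ≤ pB D d de := by
  intro D hdD
  have hd : 0 < d := hde.trans_le hded
  rw [pB_eq_distinctBinCount hd]
  set s := D / d
  set b := D - d * s
  set a := d * (1 + s) - D
  have hds : d * s ≤ D := Nat.mul_div_le D d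
  have hlt : D < d * (1 + s) := add_comm s 1 ▸ Nat.lt_mul_div_succ D hd
  have hab : a + b = d := by
    have : d * (1 + s) = d + d * s := by ring
    omega
  have hsize : a * s + b * (s + 1) = D := by
    rw [mul_add, mul_one, ← add_assoc, ← add_mul, hab]
    omega
  have hbound := descFactorial_mul_choose_le_pow_mul_distinctBinCount s a b de
  rw [hab, hsize] at hbound
  rw [← Nat.factorial_mul_descFactorial hded, div_le_div_iff₀ (by positivity)
    (by exact_mod_cast Nat.choose_pos (hded.trans hdD))]
  exact_mod_cast (by linarith [Nat.mul_le_mul_left (d - de).factorial hbound] :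
    (d - de).factorial * d.descFactorial de * D.choose de ≤
      distinctBinCount s (s + 1) a b de * ((d - de).factorial * d ^ de))
end

section
/- Fix positive integers d_e ≤ d. Then lim_{D → ∞} p_B(D, d, d_e) = d! / ((d − d_e)! · d^{d_e}), where p_B(D, d, d_e) is the near-balanced-bin success probability from the BAxUS embedding. -/
/-!
With `q = ⌊D/d⌋` and `r = D mod d`, the numerator of `p_B` is the Vandermonde-type sum
`∑ C(d-r,i) C(r,de-i) q^i ⌈D/d⌉^(de-i)`, whose weights lie between `q^de` and `(q+1)^de`; hence
`C(d,de) q^de / C(D,de) ≤ p_B ≤ C(d,de) (q+1)^de / C(D,de)`.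
Since `C(D,de) ~ D^de / de!` and `q/D, (q+1)/D → 1/d`, both bounds tend to
`C(d,de) de! / d^de = d!/((d-de)! d^de)`.
-/

open Filter Topology Asymptotics Finset

theorem Nat.sum_range_choose_mul_choose (m n k : ℕ) :
    ∑ i ∈ range (k + 1), m.choose i * n.choose (k - i) = (m + n).choose k := by
  rw [Nat.add_choose_eq, Finset.Nat.sum_antidiagonal_eq_sum_range_succ
    (fun i j => m.choose i * n.choose j)]

section WeightedVandermonde

variable {m n k a b : ℕ}

theorem Nat.choose_mul_pow_le_sum_choose_mul_pow (hab : a ≤ b) :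
    (m + n).choose k * a ^ k ≤
      ∑ i ∈ range (k + 1), m.choose i * n.choose (k - i) * a ^ i * b ^ (k - i) := by
  rw [← Nat.sum_range_choose_mul_choose, sum_mul]
  refine sum_le_sum fun i hi => ?_
  rw [← pow_mul_pow_sub a (Nat.lt_succ_iff.mp (mem_range.mp hi)), ← mul_assoc]
  gcongr

theorem Nat.sum_choose_mul_pow_le_choose_mul_pow (hab : a ≤ b) :
    ∑ i ∈ range (k + 1), m.choose i * n.choose (k - i) * a ^ i * b ^ (k - i) ≤
      (m + n).choose k * b ^ k := by
  rw [← Nat.sum_range_choose_mul_choose, sum_mul]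
  refine sum_le_sum fun i hi => ?_
  rw [← pow_mul_pow_sub b (Nat.lt_succ_iff.mp (mem_range.mp hi)), ← mul_assoc]
  gcongr

end WeightedVandermonde

theorem tendsto_pow_div_choose {f : ℕ → ℝ} {c : ℝ} (k : ℕ)
    (hf : Tendsto (fun n => f n / n) atTop (𝓝 c)) :
    Tendsto (fun n => f n ^ k / n.choose k) atTop (𝓝 (k.factorial * c ^ k)) := by
  have hequiv : (fun n => f n ^ k / n.choose k) ~[atTop]
      fun n => f n ^ k / (n ^ k / k.factorial) :=
    IsEquivalent.refl.div (isEquivalent_choose k)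
  refine hequiv.tendsto_nhds_iff.mpr ((tendsto_const_nhds.mul (hf.pow k)).congr fun n => ?_)
  rw [div_pow, div_div_eq_mul_div, mul_div_assoc']
  ring

theorem tendsto_natDiv_div_atTop (d : ℕ) :
    Tendsto (fun n : ℕ => ((n / d : ℕ) : ℝ) / n) atTop (𝓝 (d : ℝ)⁻¹) := by
  obtain rfl | hd := d.eq_zero_or_pos
  · simp
  have hfloor := (tendsto_nat_floor_div_atTop (R := ℝ)).comp
    (tendsto_natCast_atTop_atTop.atTop_div_const (r := (d : ℝ)) (by positivity))
  refine (one_mul (d : ℝ)⁻¹ ▸ hfloor.mul_const (d : ℝ)⁻¹).congr fun n => ?_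
  simp only [Function.comp_apply, Nat.floor_div_eq_div]
  rcases n.eq_zero_or_pos with rfl | hn
  · simp
  field_simp

theorem choose_mul_factorial_mul_inv_pow {d k : ℕ} (hk : k ≤ d) :
    (d.choose k : ℝ) * (k.factorial * (d : ℝ)⁻¹ ^ k) =
      d.factorial / ((d - k).factorial * d ^ k) := by
  rw [Nat.cast_choose ℝ hk, inv_pow]
  field_simp

theorem tendsto_choose_mul_pow_div_choose {d k : ℕ} (hk : k ≤ d) {f : ℕ → ℝ}
    (hf : Tendsto (fun n => f n / n) atTop (𝓝 (d : ℝ)⁻¹)) :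
    Tendsto (fun n => d.choose k * f n ^ k / n.choose k) atTop
      (𝓝 (d.factorial / ((d - k).factorial * d ^ k))) := by
  rw [← choose_mul_factorial_mul_inv_pow hk]
  simpa only [mul_div_assoc] using (tendsto_pow_div_choose k hf).const_mul (d.choose k : ℝ)

theorem pB_bounds {d : ℕ} (hd : 0 < d) (D de : ℕ) :
    d.choose de * ((D / d : ℕ) : ℝ) ^ de / D.choose de ≤ pB D d de ∧
      pB D d de ≤ d.choose de * ((D / d + 1 : ℕ) : ℝ) ^ de / D.choose de := by
  have hbins : d * (1 + D / d) - D + (D - d * (D / d)) = d := by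
    have := Nat.div_add_mod D d
    have := Nat.mod_lt D hd
    rw [Nat.mul_add, Nat.mul_one]
    omega
  have hceil_ge : D / d ≤ (D + d - 1) / d := Nat.div_le_div_right (by omega)
  have hceil_le : (D + d - 1) / d ≤ D / d + 1 :=
    (Nat.div_le_div_right (by omega : D + d - 1 ≤ D + d)).trans_eq (Nat.add_div_right D hd)
  have hlower := Nat.choose_mul_pow_le_sum_choose_mul_pow
    (m := d * (1 + D / d) - D) (n := D - d * (D / d)) (k := de) hceil_ge
  have hupper := Nat.sum_choose_mul_pow_le_choose_mul_pow
    (m := d * (1 + D / d) - D) (n := D - d * (D / d)) (k := de) hceil_ge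
  rw [hbins] at hlower hupper
  constructor <;> unfold pB <;> gcongr
  · exact_mod_cast hlower
  · exact_mod_cast hupper.trans (Nat.mul_le_mul_left _ (Nat.pow_le_pow_left hceil_le de))

/-- `lim_{D→∞} p_B(D,d,d_e) = d!/((d−d_e)!·d^{d_e})`. -/
theorem baxus_tendsto_hesbo (d de : ℕ) (hde : 0 < de) (hded : de ≤ d) :
    Tendsto (fun D : ℕ => pB D d de) atTop
      (nhds ((d.factorial : ℝ) / ((d - de).factorial * d ^ de))) := by
  have hd : 0 < d := hde.trans_le hded
  have hfloor := tendsto_natDiv_div_atTop d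
  have hfloor_succ : Tendsto (fun D : ℕ => ((D / d + 1 : ℕ) : ℝ) / D) atTop (𝓝 (d : ℝ)⁻¹) := by
    simpa only [Nat.cast_succ, add_div, add_zero] using
      hfloor.add tendsto_one_div_atTop_nhds_zero_nat
  exact tendsto_of_tendsto_of_tendsto_of_le_of_le
    (tendsto_choose_mul_pow_div_choose hded hfloor)
    (tendsto_choose_mul_pow_div_choose hded hfloor_succ)
    (fun D => (pB_bounds hd D de).1) (fun D => (pB_bounds hd D de).2)
end

section
/- Fix positive integers d_e ≤ d. Then p_B(D, d, d_e) ≤ (D/d)^{d_e} · C(d, d_e) / C(D, d_e) for all D ≥ d, where p_B is the near-balanced-bin success probability. -/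
open Finset

namespace Nat

theorem sum_range_choose_mul_choose_mul_choose (a b n k : ℕ) (hk : k ≤ n) :
    ∑ i ∈ range (n + 1), a.choose i * b.choose (n - i) * (n - i).choose k
      = b.choose k * (a + b - k).choose (n - k) := by
  have hvanish : ∀ i ∈ range (n + 1), i ∉ range (n - k + 1) →
      a.choose i * b.choose (n - i) * (n - i).choose k = 0 := by
    intro i hin hi
    rw [mem_range] at hin hi
    rw [choose_eq_zero_of_lt (by omega : n - i < k), mul_zero]
  rw [← sum_subset (range_subset_range.2 (by omega)) hvanish]
  calc ∑ i ∈ range (n - k + 1), a.choose i * b.choose (n - i) * (n - i).choose k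
      = ∑ i ∈ range (n - k + 1), b.choose k * (a.choose i * (b - k).choose (n - k - i)) := by
        refine sum_congr rfl fun i hi => ?_
        have hi : i ≤ n - k := mem_range_succ_iff.1 hi
        rw [mul_assoc, choose_mul (by omega : k ≤ n - i), show n - i - k = n - k - i by omega]
        ring
    _ = b.choose k * (a + (b - k)).choose (n - k) := by
        rw [← mul_sum, add_choose_eq, Finset.Nat.sum_antidiagonal_eq_sum_range_succ_mk]
    _ = b.choose k * (a + b - k).choose (n - k) := by
        rcases lt_or_ge b k with hbk | hkb
        · simp [choose_eq_zero_of_lt hbk]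
        · rw [Nat.add_sub_assoc hkb]

theorem sum_range_choose_mul_choose_mul_pow_mul_succ_pow (a b q n : ℕ) :
    ∑ i ∈ range (n + 1), a.choose i * b.choose (n - i) * q ^ i * (q + 1) ^ (n - i)
      = ∑ k ∈ range (n + 1), b.choose k * (a + b - k).choose (n - k) * q ^ (n - k) := by
  have hexpand : ∀ i ∈ range (n + 1),
      a.choose i * b.choose (n - i) * q ^ i * (q + 1) ^ (n - i)
        = ∑ k ∈ range (n + 1), a.choose i * b.choose (n - i) * (n - i).choose k * q ^ (n - k) := by
    intro i hi
    have hi : i ≤ n := mem_range_succ_iff.1 hi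
    rw [add_comm q 1, add_pow, mul_sum]
    refine (sum_congr rfl fun k hk => ?_).trans
      (sum_subset (range_subset_range.2 (by omega : n - i + 1 ≤ n + 1)) fun k _ hk => ?_)
    · have hk : k ≤ n - i := mem_range_succ_iff.1 hk
      rw [one_pow, one_mul, cast_id, ← pow_mul_pow_sub q (by omega : i ≤ n - k),
        show n - k - i = n - i - k by omega]
      ring
    · rw [choose_eq_zero_of_lt (by simp at hk; omega : n - i < k), mul_zero, zero_mul]
  rw [sum_congr rfl hexpand, sum_comm]
  refine sum_congr rfl fun k hk => ?_
  rw [← sum_mul, sum_range_choose_mul_choose_mul_choose a b n k (mem_range_succ_iff.1 hk)]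

theorem descFactorial_mul_pow_le_descFactorial_mul_pow {r d : ℕ} (h : r ≤ d) (k : ℕ) :
    r.descFactorial k * d ^ k ≤ d.descFactorial k * r ^ k := by
  induction k with
  | zero => simp
  | succ k ih =>
    have hfactor : (r - k) * d ≤ (d - k) * r := by
      rw [Nat.sub_mul, Nat.sub_mul, mul_comm d r]
      exact Nat.sub_le_sub_left (Nat.mul_le_mul_left k h) _
    calc r.descFactorial (k + 1) * d ^ (k + 1)
        = ((r - k) * d) * (r.descFactorial k * d ^ k) := by
          rw [descFactorial_succ, pow_succ]; ring
      _ ≤ ((d - k) * r) * (d.descFactorial k * r ^ k) := Nat.mul_le_mul hfactor ih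
      _ = d.descFactorial (k + 1) * r ^ (k + 1) := by
          rw [descFactorial_succ, pow_succ]; ring

theorem choose_mul_pow_le_choose_mul_pow {r d : ℕ} (h : r ≤ d) (k : ℕ) :
    r.choose k * d ^ k ≤ d.choose k * r ^ k := by
  refine Nat.le_of_mul_le_mul_left ?_ (factorial_pos k)
  calc k ! * (r.choose k * d ^ k)
      = r.descFactorial k * d ^ k := by rw [descFactorial_eq_factorial_mul_choose]; ring
    _ ≤ d.descFactorial k * r ^ k := descFactorial_mul_pow_le_descFactorial_mul_pow h k
    _ = k ! * (d.choose k * r ^ k) := by rw [descFactorial_eq_factorial_mul_choose]; ring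

theorem sum_choose_mul_choose_sub_mul_pow_mul_pow_le {r d : ℕ} (h : r ≤ d) (q n : ℕ) :
    (∑ k ∈ range (n + 1), r.choose k * (d - k).choose (n - k) * q ^ (n - k)) * d ^ n
      ≤ d.choose n * (r + d * q) ^ n := by
  rw [add_pow, mul_sum, sum_mul]
  refine sum_le_sum fun k hk => ?_
  have hk : k ≤ n := mem_range_succ_iff.1 hk
  calc r.choose k * (d - k).choose (n - k) * q ^ (n - k) * d ^ n
      = (r.choose k * d ^ k) * ((d - k).choose (n - k) * (d * q) ^ (n - k)) := by
        rw [mul_pow, ← pow_mul_pow_sub d hk]; ring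
    _ ≤ (d.choose k * r ^ k) * ((d - k).choose (n - k) * (d * q) ^ (n - k)) :=
        Nat.mul_le_mul_right _ (choose_mul_pow_le_choose_mul_pow h k)
    _ = (d.choose k * (d - k).choose (n - k)) * (r ^ k * (d * q) ^ (n - k)) := by ring
    _ = d.choose n * (r ^ k * (d * q) ^ (n - k) * n.choose k) := by
        rw [← choose_mul hk]; ring

/-- `(D + d - 1) / d = ⌈D/d⌉` is `D / d + 1` unless `d ∣ D`, and then there are no bins of that
size. -/
theorem choose_mod_mul_ceil_div_pow {d : ℕ} (hd : 0 < d) (D j : ℕ) :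
    (D % d).choose j * ((D + d - 1) / d) ^ j = (D % d).choose j * (D / d + 1) ^ j := by
  rcases eq_or_ne (D % d) 0 with hr | hr
  · rcases j with _ | j
    · simp
    · simp [hr]
  · have := div_add_mod D d
    have := mod_lt D hd
    have hlow : (D / d + 1) * d = d * (D / d) + d := by ring
    have hhigh : (D / d + 1 + 1) * d = d * (D / d) + 2 * d := by ring
    rw [Nat.div_eq_of_lt_le (k := D / d + 1) (by omega) (by omega)]

end Nat

open Nat in
theorem pB_eq_sum {d : ℕ} (hd : 0 < d) (D de : ℕ) :
    pB D d de = ((∑ k ∈ range (de + 1),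
      (D % d).choose k * (d - k).choose (de - k) * (D / d) ^ (de - k) : ℕ) : ℝ) / D.choose de := by
  have hr := mod_lt D hd
  have hsmall : d * (1 + D / d) - D = d - D % d := by
    have := div_add_mod D d; rw [Nat.mul_add]; omega
  have hlarge : D - d * (D / d) = D % d := by
    have := div_add_mod D d; omega
  rw [pB, hsmall, hlarge]
  congr 2
  calc ∑ i ∈ range (de + 1), (d - D % d).choose i * (D % d).choose (de - i)
        * (D / d) ^ i * ((D + d - 1) / d) ^ (de - i)
      = ∑ i ∈ range (de + 1), (d - D % d).choose i * (D % d).choose (de - i)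
        * (D / d) ^ i * (D / d + 1) ^ (de - i) := by
        refine sum_congr rfl fun i _ => ?_
        calc _ = (d - D % d).choose i * (D / d) ^ i
                * ((D % d).choose (de - i) * ((D + d - 1) / d) ^ (de - i)) := by ring
          _ = _ := by rw [choose_mod_mul_ceil_div_pow hd]; ring
    _ = _ := by
        rw [sum_range_choose_mul_choose_mul_pow_mul_succ_pow, Nat.sub_add_cancel hr.le]

/-- `p_B(D,d,d_e) ≤ (D/d)^{d_e}·C(d,d_e)/C(D,d_e)` for all `D ≥ d`. -/
theorem baxus_le_balanced_bound (d de : ℕ) (hde : 0 < de) (hded : de ≤ d) :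
    ∀ D : ℕ, d ≤ D →
      pB D d de ≤ ((D : ℝ) / d) ^ de * (d.choose de : ℝ) / (D.choose de : ℝ) := by
  intro D _
  have hd : 0 < d := hde.trans_le hded
  rw [pB_eq_sum hd]
  gcongr
  rw [div_pow, div_mul_eq_mul_div, le_div_iff₀ (by positivity)]
  have hbound := Nat.sum_choose_mul_choose_sub_mul_pow_mul_pow_le (Nat.mod_lt D hd).le (D / d) de
  rw [Nat.mod_add_div] at hbound
  exact_mod_cast hbound.trans_eq (mul_comm _ _)
end

section
/- Let d ≥ 1 and let β = (β_1,…,β_d), γ = (γ_1,…,γ_d) be vectors of nonnegative reals with γ majorized by β. Then for every k with 1 ≤ k ≤ d, the k-th elementary symmetric polynomial satisfies e_k(γ) ≥ e_k(β). -/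
/-- The `k`-th elementary symmetric polynomial of `β : Fin d → ℝ`. -/
noncomputable def esymm (d : ℕ) (k : ℕ) (β : Fin d → ℝ) : ℝ :=
  ∑ t ∈ (Finset.univ : Finset (Fin d)).powersetCard k, ∏ i ∈ t, β i

/-- `γ` is majorized by `β`: for every `k`, the largest sum of `k` entries of
`γ` is at most the largest sum of `k` entries of `β` (expressed via subsets),
and the total sums agree. -/
def Majorizes (d : ℕ) (β γ : Fin d → ℝ) : Prop :=
  (∀ s : Finset (Fin d), ∃ t : Finset (Fin d),
      t.card = s.card ∧ ∑ i ∈ s, γ i ≤ ∑ i ∈ t, β i) ∧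
    ∑ i, γ i = ∑ i, β i

/-!
The proof is a Hardy–Littlewood–Pólya induction that never sorts. Let `a` be a largest entry of
`γ`, `p` a largest entry of `β`, and `q` the largest other entry of `β` with `q ≤ a`. Replacing
`p, q` by `a, p + q - a` keeps the sum and can only increase `e_k`: the change is
`(a - q) (p - a) e_{k-2}` of the remaining entries. After this transfer, dropping `a` from both
vectors leaves the rest of `γ` majorized by the rest of the new vector, and
`e_{k+1}(a, x) = e_{k+1}(x) + a e_k(x)` closes the induction on the number of entries.
-/

namespace Multiset

theorem exists_le_map_eq {α β : Type*} {f : α → β} {s : Multiset α} {u : Multiset β}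
    (h : u ≤ s.map f) : ∃ v ≤ s, v.map f = u := by
  classical
  induction s using Multiset.induction generalizing u with
  | empty => exact ⟨0, le_rfl, by simp_all⟩
  | cons a s ih =>
    rw [map_cons] at h
    by_cases hfa : f a ∈ u
    · obtain ⟨v, hv, hvu⟩ := ih (erase_le_iff_le_cons.2 h)
      exact ⟨a ::ₘ v, cons_le_cons a hv, by rw [map_cons, hvu, cons_erase hfa]⟩
    · obtain ⟨v, hv, hvu⟩ := ih ((le_cons_of_notMem hfa).1 h)
      exact ⟨v, hv.trans (le_cons_self s a), hvu⟩

section Esymm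

variable {R : Type*} [CommSemiring R]

theorem esymm_zero_right (s : Multiset R) : s.esymm 0 = 1 := by
  simp [esymm]

theorem esymm_cons_succ (a : R) (s : Multiset R) (k : ℕ) :
    (a ::ₘ s).esymm (k + 1) = s.esymm (k + 1) + a * s.esymm k := by
  simp [esymm, powersetCard_cons, sum_map_mul_left]

theorem esymm_nonneg [PartialOrder R] [IsOrderedRing R] {s : Multiset R}
    (hs : ∀ x ∈ s, 0 ≤ x) (k : ℕ) : 0 ≤ s.esymm k :=
  sum_nonneg fun _ hx ↦ by
    obtain ⟨t, ht, rfl⟩ := mem_map.1 hx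
    exact prod_nonneg fun x hx ↦ hs x (mem_of_le (mem_powersetCard.1 ht).1 hx)

end Esymm

/-- `s ≺ t`, phrased with sub-multisets so that no sorting is needed. -/
structure IsMajorizedBy {R : Type*} [AddCommMonoid R] [LE R] (s t : Multiset R) : Prop where
  card_eq : card s = card t
  sum_eq : s.sum = t.sum
  exists_le_sum_le : ∀ u ≤ s, ∃ v ≤ t, card v = card u ∧ u.sum ≤ v.sum

theorem IsMajorizedBy.exists_ge {R : Type*} [AddCommMonoid R] [LE R] {s t : Multiset R}
    (h : IsMajorizedBy s t) {a : R} (ha : a ∈ s) : ∃ y ∈ t, a ≤ y := by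
  obtain ⟨v, hv, hcard, hsum⟩ := h.exists_le_sum_le {a} (singleton_le.2 ha)
  obtain ⟨y, rfl⟩ := card_eq_one.1 (by simpa using hcard)
  exact ⟨y, singleton_le.1 hv, by simpa using hsum⟩

variable {R : Type*} [CommRing R] [LinearOrder R] [IsStrictOrderedRing R]

theorem esymm_cons_cons_le {p q a : R} {r : Multiset R} (hqa : q ≤ a) (hap : a ≤ p)
    (hr : ∀ x ∈ r, 0 ≤ x) (k : ℕ) :
    (p ::ₘ q ::ₘ r).esymm k ≤ (a ::ₘ (p + q - a) ::ₘ r).esymm k := by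
  rcases k with _ | _ | k
  · simp [esymm_zero_right]
  · simp only [esymm_cons_succ, esymm_zero_right]
    linarith
  · simp only [esymm_cons_succ]
    have := mul_nonneg (mul_nonneg (sub_nonneg.2 hqa) (sub_nonneg.2 hap)) (esymm_nonneg hr k)
    linear_combination this

theorem exists_le_sum_le_of_le_cons {v r : Multiset R} {p y : R} (hv : v ≤ p ::ₘ r) (hy : y ∈ v)
    (hyp : y ≤ p) : ∃ w ≤ r, card v = card w + 1 ∧ v.sum ≤ p + w.sum := by
  by_cases hp : p ∈ v
  · refine ⟨v.erase p, erase_le_iff_le_cons.2 hv, (card_erase_add_one hp).symm, ?_⟩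
    rw [← sum_cons, cons_erase hp]
  · refine ⟨v.erase y, (erase_le y v).trans ((le_cons_of_notMem hp).1 hv),
      (card_erase_add_one hy).symm, ?_⟩
    conv_lhs => rw [← cons_erase hy]
    rw [sum_cons]
    gcongr

namespace IsMajorizedBy

variable {s t : Multiset R}

theorem exists_le_of_cons {a p : R} (h : IsMajorizedBy (a ::ₘ s) (p ::ₘ t))
    (hs : ∀ x ∈ s, x ≤ a) (hap : a ≤ p) (hs₀ : s ≠ 0) : ∃ y ∈ t, y ≤ a := by
  by_contra! ht
  have hcard : card s = card t := by simpa using h.card_eq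
  have ht₀ : t ≠ 0 := by rintro rfl; exact hs₀ (card_eq_zero.1 hcard)
  have hlt : card t • a < t.sum := by
    simpa using sum_lt_sum_of_nonempty (f := fun _ ↦ a) (g := id) ht₀ ht
  have := h.sum_eq
  rw [sum_cons, sum_cons] at this
  linarith [sum_le_card_nsmul s a hs, hcard ▸ hlt]

/-- `q` must be the largest entry below `a`, not just any one: `(3, 3, 0) ≺ (4, 2, 0)`, but the
transfer from `4` to `0` leaves `(3, 0) ⊀ (2, 1)`. -/
theorem of_cons_cons {a p q : R} (h : IsMajorizedBy (a ::ₘ s) (p ::ₘ q ::ₘ t))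
    (hs : ∀ x ∈ s, x ≤ a) (hp : ∀ y ∈ q ::ₘ t, y ≤ p) (hq : ∀ y ∈ t, y ≤ a → y ≤ q)
    (hqa : q ≤ a) : IsMajorizedBy s ((p + q - a) ::ₘ t) where
  card_eq := by simpa using h.card_eq
  sum_eq := by
    have := h.sum_eq
    simp only [sum_cons] at this ⊢
    linarith
  exists_le_sum_le u hu := by
    obtain ⟨v, hv, hcard, hsum⟩ := h.exists_le_sum_le (a ::ₘ u) (cons_le_cons a hu)
    obtain ⟨y, hy⟩ := card_pos_iff_exists_mem.1 (hcard ▸ card_pos.2 (cons_ne_zero))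
    have hyp : y ≤ p := by
      rcases mem_cons.1 (mem_of_le hv hy) with rfl | hy'
      · exact le_rfl
      · exact hp y hy'
    obtain ⟨w, hw, hcard', hsum'⟩ := exists_le_sum_le_of_le_cons hv hy hyp
    rw [sum_cons] at hsum
    rw [card_cons] at hcard
    by_cases hlow : ∃ z ∈ w, z ≤ a
    · obtain ⟨z, hz, hza⟩ := hlow
      have hzq : z ≤ q := by
        rcases mem_cons.1 (mem_of_le hw hz) with rfl | hz'
        · exact le_rfl
        · exact hq z hz' hza
      obtain ⟨w', hw', hcard'', hsum''⟩ := exists_le_sum_le_of_le_cons hw hz hzq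
      refine ⟨(p + q - a) ::ₘ w', cons_le_cons _ hw', by rw [card_cons]; omega, ?_⟩
      rw [sum_cons]
      linarith
    · push Not at hlow
      have hqw : q ∉ w := fun hqw ↦ (hlow q hqw).not_ge hqa
      have hwu : card w = card u := by omega
      refine ⟨w, ((le_cons_of_notMem hqw).1 hw).trans (le_cons_self t _), hwu, ?_⟩
      calc u.sum ≤ card u • a := sum_le_card_nsmul u a fun x hx ↦ hs x (mem_of_le hu hx)
        _ = card w • a := by rw [hwu]
        _ ≤ w.sum := card_nsmul_le_sum fun z hz ↦ (hlow z hz).le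

theorem exists_cons_esymm_le {a : R} (h : IsMajorizedBy (a ::ₘ s) t) (hs : ∀ x ∈ s, x ≤ a)
    (ht : ∀ y ∈ t, 0 ≤ y) :
    0 ≤ a ∧ ∃ t', IsMajorizedBy s t' ∧ (∀ y ∈ t', 0 ≤ y) ∧
      ∀ k, t.esymm k ≤ (a ::ₘ t').esymm k := by
  have ht₀ : t ≠ 0 := by
    rintro rfl
    simpa using h.card_eq
  obtain ⟨p, hpt, hp⟩ := exists_max_image id ht₀
  obtain ⟨t₁, rfl⟩ := exists_cons_of_mem hpt
  obtain ⟨y, hyt, hay⟩ := h.exists_ge (mem_cons_self a s)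
  have hap : a ≤ p := hay.trans (hp y hyt)
  by_cases hs₀ : s = 0
  · subst hs₀
    obtain rfl : t₁ = 0 := card_eq_zero.1 (by simpa using h.card_eq.symm)
    obtain rfl : a = p := by simpa using h.sum_eq
    refine ⟨ht a (mem_cons_self a 0), 0, ⟨rfl, rfl, fun u hu ↦ ?_⟩, by simp, fun k ↦ le_rfl⟩
    exact ⟨0, le_rfl, by simp [le_zero.1 hu]⟩
  obtain ⟨y, hyt₁, hya⟩ := h.exists_le_of_cons hs hap hs₀
  have hlow : t₁.filter (· ≤ a) ≠ 0 :=
    card_pos.1 (card_pos_iff_exists_mem.2 ⟨y, mem_filter.2 ⟨hyt₁, hya⟩⟩)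
  obtain ⟨q, hq, hqmax⟩ := exists_max_image id hlow
  obtain ⟨hqt₁, hqa⟩ := mem_filter.1 hq
  obtain ⟨t₂, rfl⟩ := exists_cons_of_mem hqt₁
  have hq₀ : 0 ≤ q := ht q (by simp)
  refine ⟨hq₀.trans hqa, (p + q - a) ::ₘ t₂, h.of_cons_cons hs
    (fun y hy ↦ hp y (mem_cons_of_mem hy))
    (fun y hy hya ↦ hqmax y (mem_filter.2 ⟨mem_cons_of_mem hy, hya⟩)) hqa, ?_,
    esymm_cons_cons_le hqa hap fun y hy ↦ ht y (by simp [hy])⟩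
  rw [forall_mem_cons]
  exact ⟨by linarith, fun y hy ↦ ht y (by simp [hy])⟩

theorem esymm_le (h : IsMajorizedBy s t) (ht : ∀ y ∈ t, 0 ≤ y) (k : ℕ) :
    t.esymm k ≤ s.esymm k := by
  induction s using strongInductionOn generalizing t k with
  | ih s ih =>
    rcases eq_or_ne s 0 with rfl | hs₀
    · rw [card_eq_zero.1 (h.card_eq.symm.trans card_zero)]
    obtain ⟨a, ha, hmax⟩ := exists_max_image id hs₀
    obtain ⟨s', rfl⟩ := exists_cons_of_mem ha
    obtain ⟨ha₀, t', ht'maj, ht'₀, hle⟩ :=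
      h.exists_cons_esymm_le (fun x hx ↦ hmax x (mem_cons_of_mem hx)) ht
    rcases k with _ | k
    · simp [esymm_zero_right]
    calc t.esymm (k + 1) ≤ (a ::ₘ t').esymm (k + 1) := hle _
      _ = t'.esymm (k + 1) + a * t'.esymm k := esymm_cons_succ a t' k
      _ ≤ s'.esymm (k + 1) + a * s'.esymm k := by
        gcongr <;> exact ih s' (lt_cons_self s' a) ht'maj ht'₀ _
      _ = (a ::ₘ s').esymm (k + 1) := (esymm_cons_succ a s' k).symm

end IsMajorizedBy

end Multiset

open Finset Multiset in
theorem Majorizes.isMajorizedBy {d : ℕ} {β γ : Fin d → ℝ} (h : Majorizes d β γ) :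
    (univ.val.map γ).IsMajorizedBy (univ.val.map β) where
  card_eq := by simp
  sum_eq := h.2
  exists_le_sum_le u hu := by
    obtain ⟨v, hv, rfl⟩ := exists_le_map_eq hu
    obtain ⟨t, htc, hsum⟩ := h.1 ⟨v, nodup_of_le hv univ.nodup⟩
    exact ⟨t.val.map β, map_le_map (val_le_iff.2 (subset_univ t)), by simpa using htc, hsum⟩

theorem esymm_schur_concave_general (d : ℕ) (β γ : Fin d → ℝ)
    (hβ : ∀ i, 0 ≤ β i) (hmaj : Majorizes d β γ) :
    ∀ k, 1 ≤ k → k ≤ d → esymm d k β ≤ esymm d k γ := by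
  intro k _ _
  rw [esymm, esymm, ← Finset.esymm_map_val, ← Finset.esymm_map_val]
  exact hmaj.isMajorizedBy.esymm_le (by simpa using hβ) k

/-- Schur-concavity of the elementary symmetric polynomials on
the nonnegative orthant: if `γ ≺ β` then `e_k(γ) ≥ e_k(β)` for `1 ≤ k ≤ d`. -/
theorem esymm_schur_concave (d : ℕ) (hd : 1 ≤ d) (β γ : Fin d → ℝ)
    (hβ : ∀ i, 0 ≤ β i) (hγ : ∀ i, 0 ≤ γ i) (hmaj : Majorizes d β γ) :
    ∀ k, 1 ≤ k → k ≤ d → esymm d k β ≤ esymm d k γ :=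
  esymm_schur_concave_general d β γ hβ hmaj
end

section
/- For every positive integer x, the Stirling error term r(x) = x! / (√(2πx) · (x/e)^x) satisfies exp(1/(12x+1)) ≤ r(x) ≤ exp(1/(12x)). -/
/-!
Write `s n = n! / (√(2n) (n/e)^n)`, so that the Stirling error term is `s n / √π` and
`s n → √π`. Expanding `log (s n) - log (s (n + 1))` as `∑ r^(k+1) / (2k + 3)` with
`r = (2n + 1)⁻²` and comparing termwise with the geometric series of ratios `r` and `r / 3`
squeezes this difference between `1/(12n+1) - 1/(12(n+1)+1)` and `1/(12n) - 1/(12(n+1))`.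
Hence `log (s n) - 1/(12n)` increases and `log (s n) - 1/(12n+1)` decreases, and both tend
to `log √π`.
-/

open Real Filter Topology Nat

namespace Stirling

theorem le_log_stirlingSeq_sdiff {n : ℕ} (hn : n ≠ 0) :
    1 / (12 * n + 1) - 1 / (12 * (n + 1) + 1) ≤
      log (stirlingSeq n) - log (stirlingSeq (n + 1)) := by
  obtain ⟨m, rfl⟩ := exists_eq_succ_of_ne_zero hn
  set r := ((1 : ℝ) / (2 * ↑(m + 1) + 1)) ^ 2 with hr
  have hr3 : r < 3 := by grw [hr, ← m.zero_le]; norm_num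
  have hgeom : HasSum (fun k : ℕ ↦ (r / 3) ^ (k + 1)) (r / (3 - r)) := by
    have h := (hasSum_geometric_of_lt_one (by positivity) (by linarith : r / 3 < 1)).mul_left
      (r / 3)
    rw [show r / 3 * (1 - r / 3)⁻¹ = r / (3 - r) by field_simp] at h
    simpa only [← _root_.pow_succ'] using h
  have hstep : 1 / (12 * ↑(m + 1) + 1) - 1 / (12 * (↑(m + 1) + 1) + 1) ≤ r / (3 - r) := by
    set x : ℝ := ↑(m + 1)
    have hx : 1 ≤ x := by simp [x]
    have hr' : r / (3 - r) = 1 / (12 * x ^ 2 + 12 * x + 2) := by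
      have : 12 * x ^ 2 + 12 * x + 2 ≠ 0 := by positivity
      rw [hr]
      field_simp
      rw [div_eq_one_iff_eq (by nlinarith)]
      ring
    rw [hr', div_sub_div _ _ (by positivity) (by positivity),
      div_le_div_iff₀ (by positivity) (by positivity)]
    nlinarith
  refine hstep.trans (hasSum_le (fun k ↦ ?_) hgeom (log_stirlingSeq_sdiff_hasSum m))
  have hpow : (2 * ↑(k + 1) + 1 : ℝ) ≤ 3 ^ (k + 1) := by
    have := one_add_mul_le_pow (by norm_num : (-2 : ℝ) ≤ 2) (k + 1)
    norm_num at this ⊢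
    linarith
  rw [div_pow, div_mul_eq_mul_div, one_mul]
  exact div_le_div_of_nonneg_left (by positivity) (by positivity) hpow

theorem monotone_log_stirlingSeq_sub :
    Monotone fun n : ℕ ↦ log (stirlingSeq (n + 1)) - 1 / (12 * ↑(n + 1)) := by
  refine monotone_nat_of_le_succ fun n ↦ ?_
  have h := log_stirlingSeq_sdiff_le (n + 1)
  have hsplit : (1 : ℝ) / (12 * ↑(n + 1) * (↑(n + 1) + 1)) =
      1 / (12 * ↑(n + 1)) - 1 / (12 * ↑(n + 1 + 1)) := by
    push_cast
    field_simp
    ring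
  linarith

theorem antitone_log_stirlingSeq_sub :
    Antitone fun n : ℕ ↦ log (stirlingSeq (n + 1)) - 1 / (12 * ↑(n + 1) + 1) := by
  refine antitone_nat_of_succ_le fun n ↦ ?_
  have h := le_log_stirlingSeq_sdiff n.succ_ne_zero
  push_cast at h ⊢
  linarith

theorem tendsto_log_stirlingSeq_sub (c : ℝ) :
    Tendsto (fun n : ℕ ↦ log (stirlingSeq (n + 1)) - 1 / (12 * ↑(n + 1) + c)) atTop
      (𝓝 (log √π)) := by
  have hlog : Tendsto (fun n : ℕ ↦ log (stirlingSeq (n + 1))) atTop (𝓝 (log √π)) :=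
    (tendsto_stirlingSeq_sqrt_pi.comp (tendsto_add_atTop_nat 1)).log (by positivity)
  have hden : Tendsto (fun n : ℕ ↦ 12 * (↑(n + 1) : ℝ) + c) atTop atTop :=
    ((tendsto_natCast_atTop_atTop.comp (tendsto_add_atTop_nat 1)).const_mul_atTop
      (by norm_num : (0 : ℝ) < 12)).atTop_add tendsto_const_nhds
  simpa [one_div] using hlog.sub (tendsto_inv_atTop_zero.comp hden)

theorem stirlingSeq_le_sqrt_pi_mul_exp {n : ℕ} (hn : n ≠ 0) :
    stirlingSeq n ≤ √π * exp (1 / (12 * n)) := by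
  obtain ⟨m, rfl⟩ := exists_eq_succ_of_ne_zero hn
  have h := monotone_log_stirlingSeq_sub.ge_of_tendsto
    (by simpa using tendsto_log_stirlingSeq_sub 0) m
  rw [← log_le_log_iff (stirlingSeq'_pos m) (by positivity), log_mul (by positivity)
    (by positivity), log_exp]
  linarith

theorem sqrt_pi_mul_exp_le_stirlingSeq {n : ℕ} (hn : n ≠ 0) :
    √π * exp (1 / (12 * n + 1)) ≤ stirlingSeq n := by
  obtain ⟨m, rfl⟩ := exists_eq_succ_of_ne_zero hn
  have h := antitone_log_stirlingSeq_sub.le_of_tendsto (tendsto_log_stirlingSeq_sub 1) m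
  rw [← log_le_log_iff (by positivity) (stirlingSeq'_pos m), log_mul (by positivity)
    (by positivity), log_exp]
  linarith

theorem factorial_div_stirling_eq (n : ℕ) :
    n ! / (√(2 * π * n) * (n / exp 1) ^ n) = stirlingSeq n / √π := by
  rw [stirlingSeq, mul_comm 2 π, mul_assoc, sqrt_mul pi_pos.le]
  field_simp

end Stirling

/-- Robbins: the Stirling error term
`r(x) = x!/(√(2πx)·(x/e)^x)` satisfies
`exp(1/(12x+1)) ≤ r(x) ≤ exp(1/(12x))` for every positive integer `x`. -/
theorem robbins_bounds (x : ℕ) (hx : 0 < x) :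
    Real.exp (1 / (12 * x + 1)) ≤
        (x.factorial : ℝ) / (Real.sqrt (2 * π * x) * ((x : ℝ) / Real.exp 1) ^ x) ∧
      (x.factorial : ℝ) / (Real.sqrt (2 * π * x) * ((x : ℝ) / Real.exp 1) ^ x)
        ≤ Real.exp (1 / (12 * x)) := by
  have hπ : 0 < √π := by positivity
  rw [Stirling.factorial_div_stirling_eq, le_div_iff₀ hπ, div_le_iff₀ hπ, mul_comm,
    mul_comm _ √π]
  exact ⟨Stirling.sqrt_pi_mul_exp_le_stirlingSeq hx.ne',
    Stirling.stirlingSeq_le_sqrt_pi_mul_exp hx.ne'⟩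
end
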